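/- Let 𝔽 ∈ {ℝ, ℂ}, let m, n, k be positive integers, let c₀ > 0, let A ∈ 𝔽^{m×n}, and let Δ : ℝ^m → 𝔽^n be a map satisfying dist(Δ(|Ax|), x) ≤ c₀·σ_k(x)₂ for all x ∈ 𝔽^n. Then for every η ∈ 𝔽^n with A·η = 0 and every index set T ⊆ {1,…,n} with |T| ≤ 2k, one has ‖η‖₂ ≤ c₀·‖η_{T^c}‖₂. -/

import Mathlib

open MeasureTheory ProbabilityTheory Real Finset

/-- The `ℓ_q` (quasi-)norm `(∑ i, ‖x i‖^q)^{1/q}` of a vector with entries in `𝕜 ∈ {ℝ, ℂ}`. -/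
noncomputable def lpNorm {ι : Type*} [Fintype ι] {𝕜 : Type*} [RCLike 𝕜] (q : ℝ) (x : ι → 𝕜) : ℝ :=
  (∑ i, ‖x i‖ ^ q) ^ (1 / q)

open Classical in
/-- The number of nonzero entries of a vector. -/
noncomputable def l0Norm {ι : Type*} [Fintype ι] {𝕜 : Type*} [RCLike 𝕜] (x : ι → 𝕜) : ℕ :=
  (Finset.univ.filter fun i => x i ≠ 0).card

/-- The phase distance `dist_q(x,y) = inf_{|c|=1} ‖x - c • y‖_q`. -/
noncomputable def phaseDist {ι : Type*} [Fintype ι] {𝕜 : Type*} [RCLike 𝕜] (q : ℝ)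
    (x y : ι → 𝕜) : ℝ :=
  sInf {d | ∃ c : 𝕜, ‖c‖ = 1 ∧ d = lpNorm q (fun i => x i - c * y i)}

/-- The best `k`-term approximation error `σ_k(x)_q = inf {‖x - z‖_q : ‖z‖₀ ≤ k}`. -/
noncomputable def sigmaK {ι : Type*} [Fintype ι] {𝕜 : Type*} [RCLike 𝕜] (k : ℕ) (q : ℝ)
    (x : ι → 𝕜) : ℝ :=
  sInf {d | ∃ z : ι → 𝕜, l0Norm z ≤ k ∧ d = lpNorm q (fun i => x i - z i)}

/-- The entrywise modulus `|Ax|` of the matrix-vector product `Ax`. -/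
noncomputable def absMv {m n : ℕ} {𝕜 : Type*} [RCLike 𝕜] (A : Fin m → Fin n → 𝕜)
    (x : Fin n → 𝕜) : Fin m → ℝ :=
  fun i => ‖∑ j, A i j * x j‖

/-- `A` satisfies the phaseless bi-Lipschitz condition on `X` with constants `L, U`:
`L·dist(x,y) ≤ ‖|Ax| - |Ay|‖₂ ≤ U·dist(x,y)` for all `x, y ∈ X`. -/
def PhaselessBiLip {m n : ℕ} {𝕜 : Type*} [RCLike 𝕜] (A : Fin m → Fin n → 𝕜)
    (X : Set (Fin n → 𝕜)) (L U : ℝ) : Prop :=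
  ∀ x ∈ X, ∀ y ∈ X,
    L * phaseDist 2 x y ≤ lpNorm 2 (fun i => absMv A x i - absMv A y i) ∧
    lpNorm 2 (fun i => absMv A x i - absMv A y i) ≤ U * phaseDist 2 x y

/- Split `T = T₀ ∪ T₁` with `|T₀|, |T₁| ≤ k` and write `η = x₁ - x₂` with `x₁ = η_{T₀}`.
Then `|Ax₁| = |Ax₂|`, so both are decoded to the same `z`; as `x₁` is `k`-sparse,
`‖η‖ = dist(x₁, x₂) ≤ dist(z, x₁) + dist(z, x₂) ≤ c₀ σ_k(x₂)₂ ≤ c₀ ‖η_{Tᶜ}‖`. -/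

section LpNorm

variable {ι : Type*} [Fintype ι] {𝕜 : Type*} [RCLike 𝕜]

lemma lpNorm_nonneg (q : ℝ) (x : ι → 𝕜) : 0 ≤ lpNorm q x :=
  Real.rpow_nonneg (Finset.sum_nonneg fun _ _ => Real.rpow_nonneg (norm_nonneg _) _) _

lemma lpNorm_congr (q : ℝ) {x y : ι → 𝕜} (h : ∀ i, ‖x i‖ = ‖y i‖) :
    lpNorm q x = lpNorm q y := by
  simp only [_root_.lpNorm, h]

lemma lpNorm_zero {q : ℝ} (hq : q ≠ 0) : lpNorm q (0 : ι → 𝕜) = 0 := by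
  simp [_root_.lpNorm, Real.zero_rpow hq, Real.zero_rpow (inv_ne_zero hq)]

lemma lpNorm_two_eq_norm_toLp (x : ι → 𝕜) : lpNorm 2 x = ‖WithLp.toLp 2 x‖ := by
  rw [EuclideanSpace.norm_eq, Real.sqrt_eq_rpow, _root_.lpNorm]
  norm_num

end LpNorm

section PhaseDist

variable {ι : Type*} [Fintype ι] {𝕜 : Type*} [RCLike 𝕜]

lemma phaseDist_le_lpNorm {q : ℝ} (x y : ι → 𝕜) {c : 𝕜} (hc : ‖c‖ = 1) :
    phaseDist q x y ≤ lpNorm q (fun i => x i - c * y i) :=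
  csInf_le ⟨0, fun _ ⟨_, _, hd⟩ => hd ▸ lpNorm_nonneg q _⟩ ⟨c, hc, rfl⟩

lemma le_phaseDist {q r : ℝ} {x y : ι → 𝕜}
    (h : ∀ c : 𝕜, ‖c‖ = 1 → r ≤ lpNorm q (fun i => x i - c * y i)) : r ≤ phaseDist q x y :=
  le_csInf ⟨_, 1, norm_one, rfl⟩ fun _ ⟨c, hc, hd⟩ => hd ▸ h c hc

/-- On vectors with disjoint supports every phase gives the same distance. -/
lemma phaseDist_eq_of_disjoint (q : ℝ) {x y : ι → 𝕜} (h : ∀ i, x i = 0 ∨ y i = 0) :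
    phaseDist q x y = lpNorm q (fun i => x i - y i) := by
  have hconst : ∀ c : 𝕜, ‖c‖ = 1 →
      lpNorm q (fun i => x i - c * y i) = lpNorm q (fun i => x i - y i) := fun c hc =>
    lpNorm_congr q fun i => by rcases h i with h | h <;> simp [h, hc]
  refine le_antisymm ?_ (le_phaseDist fun c hc => (hconst c hc).ge)
  simpa [hconst 1 norm_one] using phaseDist_le_lpNorm (q := q) x y norm_one

lemma phaseDist_two_le_add (x y z : ι → 𝕜) :
    phaseDist 2 x y ≤ phaseDist 2 z x + phaseDist 2 z y := by
  have key : ∀ a b : 𝕜, ‖a‖ = 1 → ‖b‖ = 1 →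
      phaseDist 2 x y ≤
        lpNorm 2 (fun i => z i - a * x i) + lpNorm 2 (fun i => z i - b * y i) := by
    intro a b ha hb
    have ha0 : a ≠ 0 := norm_ne_zero_iff.mp (ha ▸ one_ne_zero)
    have hab : ‖a⁻¹ * b‖ = 1 := by rw [norm_mul, norm_inv, ha, hb]; norm_num
    refine (phaseDist_le_lpNorm x y hab).trans ?_
    simp only [lpNorm_two_eq_norm_toLp]
    have hsplit : WithLp.toLp 2 (fun i => x i - a⁻¹ * b * y i) = a⁻¹ •
        (WithLp.toLp 2 (fun i => z i - b * y i) - WithLp.toLp 2 (fun i => z i - a * x i)) := by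
      ext i
      simp only [PiLp.smul_apply, PiLp.sub_apply, smul_eq_mul]
      field_simp
      ring
    rw [hsplit, norm_smul, norm_inv, ha, inv_one, one_mul, add_comm]
    exact norm_sub_le _ _
  refine sub_le_iff_le_add'.mp (le_phaseDist fun b hb => sub_le_comm.mp ?_)
  exact le_phaseDist fun a ha => sub_le_iff_le_add.mpr (key a b ha hb)

end PhaseDist

lemma sigmaK_le_lpNorm_compl {ι : Type*} [Fintype ι] [DecidableEq ι] {𝕜 : Type*} [RCLike 𝕜]
    (q : ℝ) {k : ℕ} (x : ι → 𝕜) {s : Finset ι} (hs : s.card ≤ k) :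
    sigmaK k q x ≤ lpNorm q (fun i => if i ∈ s then 0 else x i) := by
  set z : ι → 𝕜 := fun i => if i ∈ s then x i else 0
  have hz : l0Norm z ≤ k := by
    refine le_trans (Finset.card_le_card fun i hi => ?_) hs
    by_contra his
    simp [z, his] at hi
  exact csInf_le ⟨0, fun _ ⟨_, _, hd⟩ => hd ▸ lpNorm_nonneg q _⟩
    ⟨z, hz, lpNorm_congr q fun i => by by_cases hi : i ∈ s <;> simp [z, hi]⟩

lemma absMv_eq_of_sub_mem_ker {m n : ℕ} {𝕜 : Type*} [RCLike 𝕜] {A : Fin m → Fin n → 𝕜}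
    {x y : Fin n → 𝕜} (h : ∀ i, ∑ j, A i j * (x j - y j) = 0) : absMv A x = absMv A y := by
  funext i
  simp only [absMv, mul_sub, Finset.sum_sub_distrib, sub_eq_zero] at h ⊢
  rw [h i]

lemma Finset.exists_subset_card_le_card_sdiff_le {α : Type*} [DecidableEq α] {T : Finset α}
    {k : ℕ} (hT : T.card ≤ 2 * k) : ∃ T₀ ⊆ T, T₀.card ≤ k ∧ (T \ T₀).card ≤ k := by
  obtain ⟨T₀, hsub, hcard⟩ := Finset.exists_subset_card_eq (min_le_left T.card k)
  refine ⟨T₀, hsub, hcard ▸ min_le_right _ _, ?_⟩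
  rw [Finset.card_sdiff_of_subset hsub, hcard]
  omega

theorem stmt12_general {𝕜 : Type*} [RCLike 𝕜] (m n k : ℕ)
    (c₀ : ℝ) (hc₀ : 0 < c₀) (A : Fin m → Fin n → 𝕜) (Δ : (Fin m → ℝ) → (Fin n → 𝕜))
    (hΔ : ∀ x : Fin n → 𝕜, phaseDist 2 (Δ (absMv A x)) x ≤ c₀ * sigmaK k 2 x)
    (η : Fin n → 𝕜) (hη : ∀ i, ∑ j, A i j * η j = 0)
    (T : Finset (Fin n)) (hT : T.card ≤ 2 * k) :
    lpNorm 2 η ≤ c₀ * lpNorm 2 (fun i => if i ∈ T then 0 else η i) := by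
  obtain ⟨T₀, hT₀T, hT₀, hT₁⟩ := Finset.exists_subset_card_le_card_sdiff_le hT
  set x₁ : Fin n → 𝕜 := fun i => if i ∈ T₀ then η i else 0
  set x₂ : Fin n → 𝕜 := fun i => if i ∈ T₀ then 0 else -η i
  have hsub : ∀ i, x₁ i - x₂ i = η i := fun i => by by_cases hi : i ∈ T₀ <;> simp [x₁, x₂, hi]
  have hA : absMv A x₁ = absMv A x₂ := absMv_eq_of_sub_mem_ker fun i => by simp only [hsub, hη]
  have hdist : lpNorm 2 η = phaseDist 2 x₁ x₂ := by
    rw [phaseDist_eq_of_disjoint 2 fun i => by by_cases hi : i ∈ T₀ <;> simp [x₁, x₂, hi]]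
    simp only [hsub]
  have hσ₁ : sigmaK k 2 x₁ ≤ 0 := by
    have hx₁ : (fun i => if i ∈ T₀ then 0 else x₁ i) = 0 := by
      ext i; by_cases hi : i ∈ T₀ <;> simp [x₁, hi]
    simpa [hx₁, lpNorm_zero two_ne_zero] using sigmaK_le_lpNorm_compl 2 x₁ hT₀
  have hσ₂ : sigmaK k 2 x₂ ≤ lpNorm 2 (fun i => if i ∈ T then 0 else η i) := by
    refine (sigmaK_le_lpNorm_compl 2 x₂ hT₁).trans_eq (lpNorm_congr 2 fun i => ?_)
    by_cases hi₀ : i ∈ T₀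
    · simp [x₂, hi₀, hT₀T hi₀]
    · by_cases hi : i ∈ T <;> simp [x₂, hi₀, hi]
  calc lpNorm 2 η = phaseDist 2 x₁ x₂ := hdist
    _ ≤ phaseDist 2 (Δ (absMv A x₁)) x₁ + phaseDist 2 (Δ (absMv A x₂)) x₂ := by
      rw [← hA]; exact phaseDist_two_le_add _ _ _
    _ ≤ c₀ * sigmaK k 2 x₁ + c₀ * sigmaK k 2 x₂ := add_le_add (hΔ x₁) (hΔ x₂)
    _ ≤ c₀ * lpNorm 2 (fun i => if i ∈ T then 0 else η i) := by nlinarith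

/-- null-space property in the proof of Proposition `thm:bad_22`: if a decoder
`Δ` achieves `dist(Δ(|Ax|), x) ≤ c₀·σ_k(x)₂` for all `x`, then every `η` in the null space of `A`
and every index set `T` with `|T| ≤ 2k` satisfy `‖η‖₂ ≤ c₀·‖η_{T^c}‖₂`. -/
theorem stmt12 {𝕜 : Type*} [RCLike 𝕜] (m n k : ℕ) (hm : 0 < m) (hn : 0 < n) (hk : 0 < k)
    (c₀ : ℝ) (hc₀ : 0 < c₀) (A : Fin m → Fin n → 𝕜) (Δ : (Fin m → ℝ) → (Fin n → 𝕜))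
    (hΔ : ∀ x : Fin n → 𝕜, phaseDist 2 (Δ (absMv A x)) x ≤ c₀ * sigmaK k 2 x)
    (η : Fin n → 𝕜) (hη : ∀ i, ∑ j, A i j * η j = 0)
    (T : Finset (Fin n)) (hT : T.card ≤ 2 * k) :
    lpNorm 2 η ≤ c₀ * lpNorm 2 (fun i => if i ∈ T then 0 else η i) :=
  stmt12_general m n k c₀ hc₀ A Δ hΔ η hη T hT
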